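/- Let w : ℝ² → ℝ be smooth with coordinates (x,t), and for λ ∈ ℂ \ {0} define the 3×3 matrices A₁ = [[wₓ, 0, λ],[λ, −wₓ, 0],[0, λ, 0]] and A₂ = λ⁻¹·[[0, e^{−2w}, 0],[0, 0, e^{w}],[e^{w}, 0, 0]]. Then ∂ₓA₂ − ∂ₜA₁ + [A₁, A₂] = 0 holds for all λ ∈ ℂ \ {0} if and only if w satisfies the Tzitzeica equation w_{xt} = e^{w} − e^{−2w}. -/

import Mathlib

attribute [local instance] Matrix.normedAddCommGroup Matrix.normedSpace

/-- Partial derivative in the `x` (first) direction. -/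
noncomputable def pdx {E : Type*} [NormedAddCommGroup E] [NormedSpace ℝ E]
    (f : ℝ × ℝ → E) (p : ℝ × ℝ) : E :=
  fderiv ℝ f p (1, 0)

/-- Partial derivative in the `t` (second) direction. -/
noncomputable def pdt {E : Type*} [NormedAddCommGroup E] [NormedSpace ℝ E]
    (f : ℝ × ℝ → E) (p : ℝ × ℝ) : E :=
  fderiv ℝ f p (0, 1)

set_option linter.unusedTactic false in
set_option maxHeartbeats 1000000 in
lemma aux_key (w : ℝ × ℝ → ℝ) (hw : ContDiff ℝ (⊤ : ℕ∞) w) (z : ℂ) (hz : z ≠ 0) (p : ℝ × ℝ) :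
    pdx (fun q => z⁻¹ • !![0, (Real.exp (-2 * w q) : ℂ), 0;
               0, 0, (Real.exp (w q) : ℂ);
               (Real.exp (w q) : ℂ), 0, 0]) p
    - pdt (fun q => !![((pdx w q : ℝ) : ℂ), 0, z;
         z, -((pdx w q : ℝ) : ℂ), 0;
         0, z, 0]) p
    + (!![((pdx w p : ℝ) : ℂ), 0, z;
         z, -((pdx w p : ℝ) : ℂ), 0;
         0, z, 0] * (z⁻¹ • !![0, (Real.exp (-2 * w p) : ℂ), 0;
               0, 0, (Real.exp (w p) : ℂ);
               (Real.exp (w p) : ℂ), 0, 0])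
       - (z⁻¹ • !![0, (Real.exp (-2 * w p) : ℂ), 0;
               0, 0, (Real.exp (w p) : ℂ);
               (Real.exp (w p) : ℂ), 0, 0]) * !![((pdx w p : ℝ) : ℂ), 0, z;
         z, -((pdx w p : ℝ) : ℂ), 0;
         0, z, 0])
    = ((Real.exp (w p) - Real.exp (-2 * w p) - pdt (fun y => pdx w y) p : ℝ) : ℂ)
        • !![1,0,0;0,-1,0;0,0,0] := by
  have hwd : Differentiable ℝ w := hw.differentiable (by simp)
  have hwp : HasFDerivAt w (fderiv ℝ w p) p := (hwd p).hasFDerivAt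
  have hU : ContDiff ℝ (⊤ : ℕ∞) (fun q => pdx w q) := by
    have h1 : ContDiff ℝ (⊤ : ℕ∞) (fderiv ℝ w) := hw.fderiv_right (by simp)
    exact (ContinuousLinearMap.apply ℝ ℝ ((1:ℝ), (0:ℝ))).contDiff.comp h1
  have hUp : HasFDerivAt (fun q => pdx w q) (fderiv ℝ (fun q => pdx w q) p) p :=
    ((hU.differentiable (by simp)) p).hasFDerivAt
  have h1 : HasFDerivAt (fun q => ((Real.exp (-2 * w q) : ℝ) : ℂ))
      (Complex.ofRealCLM.comp (Real.exp (-2 * w p) • ((-2 : ℝ) • fderiv ℝ w p))) p :=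
    Complex.ofRealCLM.hasFDerivAt.comp p ((hwp.const_mul (-2)).exp)
  have h2 : HasFDerivAt (fun q => ((Real.exp (w q) : ℝ) : ℂ))
      (Complex.ofRealCLM.comp (Real.exp (w p) • fderiv ℝ w p)) p :=
    Complex.ofRealCLM.hasFDerivAt.comp p hwp.exp
  have h3 : HasFDerivAt (fun q => ((pdx w q : ℝ) : ℂ))
      (Complex.ofRealCLM.comp (fderiv ℝ (fun q => pdx w q) p)) p :=
    Complex.ofRealCLM.hasFDerivAt.comp p hUp
  have hA2 : (fun q => z⁻¹ • !![0, (Real.exp (-2 * w q) : ℂ), 0;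
               0, 0, (Real.exp (w q) : ℂ);
               (Real.exp (w q) : ℂ), 0, 0])
      = fun q => ((Real.exp (-2 * w q) : ℝ) : ℂ) • (z⁻¹ • (!![0,1,0;0,0,0;0,0,0] : Matrix (Fin 3) (Fin 3) ℂ))
        + ((Real.exp (w q) : ℝ) : ℂ) • (z⁻¹ • (!![0,0,0;0,0,1;1,0,0] : Matrix (Fin 3) (Fin 3) ℂ)) := by
    funext q
    ext i j
    fin_cases i <;> fin_cases j <;>
      simp [Matrix.smul_apply, Matrix.vecHead, Matrix.vecTail] <;> ring_nf
  have hA1 : (fun q => (!![((pdx w q : ℝ) : ℂ), 0, z;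
         z, -((pdx w q : ℝ) : ℂ), 0;
         0, z, 0] : Matrix (Fin 3) (Fin 3) ℂ))
      = fun q => ((pdx w q : ℝ) : ℂ) • (!![1,0,0;0,-1,0;0,0,0] : Matrix (Fin 3) (Fin 3) ℂ)
        + (!![0,0,z;z,0,0;0,z,0] : Matrix (Fin 3) (Fin 3) ℂ) := by
    funext q
    ext i j
    fin_cases i <;> fin_cases j <;> simp [Matrix.smul_apply, Matrix.vecHead, Matrix.vecTail]
  have hD2 : HasFDerivAt (fun q => ((Real.exp (-2 * w q) : ℝ) : ℂ) • (z⁻¹ • (!![0,1,0;0,0,0;0,0,0] : Matrix (Fin 3) (Fin 3) ℂ))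
        + ((Real.exp (w q) : ℝ) : ℂ) • (z⁻¹ • (!![0,0,0;0,0,1;1,0,0] : Matrix (Fin 3) (Fin 3) ℂ)))
      ((Complex.ofRealCLM.comp (Real.exp (-2 * w p) • ((-2 : ℝ) • fderiv ℝ w p))).smulRight (z⁻¹ • (!![0,1,0;0,0,0;0,0,0] : Matrix (Fin 3) (Fin 3) ℂ))
       + (Complex.ofRealCLM.comp (Real.exp (w p) • fderiv ℝ w p)).smulRight (z⁻¹ • (!![0,0,0;0,0,1;1,0,0] : Matrix (Fin 3) (Fin 3) ℂ))) p :=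
    (h1.smul_const _).add (h2.smul_const _)
  have hD1 : HasFDerivAt (fun q => ((pdx w q : ℝ) : ℂ) • (!![1,0,0;0,-1,0;0,0,0] : Matrix (Fin 3) (Fin 3) ℂ)
        + (!![0,0,z;z,0,0;0,z,0] : Matrix (Fin 3) (Fin 3) ℂ))
      ((Complex.ofRealCLM.comp (fderiv ℝ (fun q => pdx w q) p)).smulRight (!![1,0,0;0,-1,0;0,0,0] : Matrix (Fin 3) (Fin 3) ℂ)) p :=
    (h3.smul_const _).add_const _
  have e2 : pdx (fun q => z⁻¹ • !![0, (Real.exp (-2 * w q) : ℂ), 0;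
               0, 0, (Real.exp (w q) : ℂ);
               (Real.exp (w q) : ℂ), 0, 0]) p
      = ((Real.exp (-2 * w p) * (-2 * pdx w p) : ℝ) : ℂ) • (z⁻¹ • (!![0,1,0;0,0,0;0,0,0] : Matrix (Fin 3) (Fin 3) ℂ))
        + ((Real.exp (w p) * pdx w p : ℝ) : ℂ) • (z⁻¹ • (!![0,0,0;0,0,1;1,0,0] : Matrix (Fin 3) (Fin 3) ℂ)) := by
    rw [pdx, hA2]; erw [hD2.fderiv, show ∀ (f g : ℝ × ℝ →L[ℝ] Matrix (Fin 3) (Fin 3) ℂ) (x : ℝ × ℝ), (f + g) x = f x + g x from fun _ _ _ => rfl, ContinuousLinearMap.smulRight_apply, ContinuousLinearMap.smulRight_apply]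
    simp [pdx]
  have e1 : pdt (fun q => (!![((pdx w q : ℝ) : ℂ), 0, z;
         z, -((pdx w q : ℝ) : ℂ), 0;
         0, z, 0] : Matrix (Fin 3) (Fin 3) ℂ)) p
      = ((pdt (fun y => pdx w y) p : ℝ) : ℂ) • (!![1,0,0;0,-1,0;0,0,0] : Matrix (Fin 3) (Fin 3) ℂ) := by
    rw [pdt, hA1]; erw [hD1.fderiv, ContinuousLinearMap.smulRight_apply]
    simp [pdt]
  rw [e1, e2]
  ext i j
  fin_cases i <;> fin_cases j <;>
    simp [Matrix.mul_apply, Fin.sum_univ_three, Matrix.smul_apply, Matrix.sub_apply,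
      Matrix.add_apply, Matrix.vecHead, Matrix.vecTail] <;>
    push_cast <;> field_simp <;> ring

/-- The zero-curvature equation for the Tzitzeica Lax pair holds for all
`λ ≠ 0` iff `w` satisfies the Tzitzeica equation `w_{xt} = e^w − e^{−2w}`. -/
theorem stmt_14 (w : ℝ × ℝ → ℝ) (hw : ContDiff ℝ (⊤ : ℕ∞) w) :
    let A₁ : ℂ → ℝ × ℝ → Matrix (Fin 3) (Fin 3) ℂ := fun z p =>
      !![((pdx w p : ℝ) : ℂ), 0, z;
         z, -((pdx w p : ℝ) : ℂ), 0;
         0, z, 0]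
    let A₂ : ℂ → ℝ × ℝ → Matrix (Fin 3) (Fin 3) ℂ := fun z p =>
      z⁻¹ • !![0, (Real.exp (-2 * w p) : ℂ), 0;
               0, 0, (Real.exp (w p) : ℂ);
               (Real.exp (w p) : ℂ), 0, 0]
    (∀ z : ℂ, z ≠ 0 → ∀ p,
        pdx (A₂ z) p - pdt (A₁ z) p + (A₁ z p * A₂ z p - A₂ z p * A₁ z p) = 0) ↔
      (∀ p, pdt (fun y => pdx w y) p = Real.exp (w p) - Real.exp (-2 * w p)) := by
  intro A₁ A₂
  constructor
  · intro h p
    have h1 : pdx (fun q => (1:ℂ)⁻¹ • !![0, (Real.exp (-2 * w q) : ℂ), 0;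
               0, 0, (Real.exp (w q) : ℂ);
               (Real.exp (w q) : ℂ), 0, 0]) p
        - pdt (fun q => !![((pdx w q : ℝ) : ℂ), 0, (1:ℂ);
             (1:ℂ), -((pdx w q : ℝ) : ℂ), 0;
             0, (1:ℂ), 0]) p
        + (!![((pdx w p : ℝ) : ℂ), 0, (1:ℂ);
             (1:ℂ), -((pdx w p : ℝ) : ℂ), 0;
             0, (1:ℂ), 0] * ((1:ℂ)⁻¹ • !![0, (Real.exp (-2 * w p) : ℂ), 0;
                   0, 0, (Real.exp (w p) : ℂ);
                   (Real.exp (w p) : ℂ), 0, 0])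
           - ((1:ℂ)⁻¹ • !![0, (Real.exp (-2 * w p) : ℂ), 0;
                   0, 0, (Real.exp (w p) : ℂ);
                   (Real.exp (w p) : ℂ), 0, 0]) * !![((pdx w p : ℝ) : ℂ), 0, (1:ℂ);
             (1:ℂ), -((pdx w p : ℝ) : ℂ), 0;
             0, (1:ℂ), 0]) = 0 := h 1 one_ne_zero p
    rw [aux_key w hw 1 one_ne_zero p] at h1
    have h2 := congrFun (congrFun h1 0) 0
    have h3 : ((Real.exp (w p) - Real.exp (-2 * w p) - pdt (fun y => pdx w y) p : ℝ) : ℂ) = 0 := by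
      simpa [Matrix.smul_apply, -Complex.ofReal_sub, -Complex.ofReal_exp] using h2
    have h4 : Real.exp (w p) - Real.exp (-2 * w p) - pdt (fun y => pdx w y) p = 0 := by
      exact_mod_cast h3
    linarith
  · intro h z hz p
    show pdx (fun q => z⁻¹ • !![0, (Real.exp (-2 * w q) : ℂ), 0;
               0, 0, (Real.exp (w q) : ℂ);
               (Real.exp (w q) : ℂ), 0, 0]) p
        - pdt (fun q => !![((pdx w q : ℝ) : ℂ), 0, z;
             z, -((pdx w q : ℝ) : ℂ), 0;
             0, z, 0]) p
        + (!![((pdx w p : ℝ) : ℂ), 0, z;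
             z, -((pdx w p : ℝ) : ℂ), 0;
             0, z, 0] * (z⁻¹ • !![0, (Real.exp (-2 * w p) : ℂ), 0;
                   0, 0, (Real.exp (w p) : ℂ);
                   (Real.exp (w p) : ℂ), 0, 0])
           - (z⁻¹ • !![0, (Real.exp (-2 * w p) : ℂ), 0;
                   0, 0, (Real.exp (w p) : ℂ);
                   (Real.exp (w p) : ℂ), 0, 0]) * !![((pdx w p : ℝ) : ℂ), 0, z;
             z, -((pdx w p : ℝ) : ℂ), 0;
             0, z, 0]) = 0
    rw [aux_key w hw z hz p, h p]
    simp
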